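/- arXiv:2001.04878 — 2 statements merged into one kernel-verified Lean document; each statement's English description precedes it below -/
import Mathlib

section
/- Let g be the gradient of the scalar output y^L of a deep linear network with respect to the concatenated weight vector W, and let Ĥ be the Hessian of y^L with respect to W, where the weight entries are sampled i.i.d. from a symmetric distribution. Then E[gᵀ Ĥ g] = 0. -/
open MeasureTheory ProbabilityTheory

namespace DLN

/-- Parameters (weights) of an `L`-layer linear network with widths `n 0, n 1, …, n L`.
`W k j i` is the weight `w_{i j}^{k+1}` of the paper: the entry in row `j ∈ Fin (n k)`
and column `i ∈ Fin (n (k+1))` of the matrix `W^{k+1} ∈ ℝ^{n k × n (k+1)}`. -/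
abbrev Params (n : ℕ → ℕ) (L : ℕ) := (k : Fin L) → Fin (n k.1) → Fin (n (k.1 + 1)) → ℝ

/-- Weights for every layer index `k : ℕ` (used for the recursive definitions). -/
abbrev WTot (n : ℕ → ℕ) := (k : ℕ) → Fin (n k) → Fin (n (k + 1)) → ℝ

/-- Extend finitely many weight matrices by zero. -/
def ext (n : ℕ → ℕ) (L : ℕ) (W : Params n L) : WTot n :=
  fun k => if h : k < L then W ⟨k, h⟩ else 0

/-- Activations: `act n x Wt l = y^l`, with `y^0 = x` and `y^{l+1} = W^{(l+1)⊤} y^l`. -/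
def act (n : ℕ → ℕ) (x : Fin (n 0) → ℝ) (Wt : WTot n) : (l : ℕ) → Fin (n l) → ℝ
  | 0 => x
  | l + 1 => fun i => ∑ j, Wt l j i * act n x Wt l j

/-- `chain n Wt l m` is the matrix product `W^{l+1} W^{l+2} ⋯ W^{l+m} ∈ ℝ^{n l × n (l+m)}`. -/
def chain (n : ℕ → ℕ) (Wt : WTot n) (l : ℕ) : (m : ℕ) → Fin (n l) → Fin (n (l + m)) → ℝ
  | 0 => fun u j => if (u : ℕ) = (j : ℕ) then 1 else 0
  | m + 1 => fun u j => ∑ i : Fin (n (l + m)), chain n Wt l m u i * Wt (l + m) i j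

/-- `A n Wt l k u j = a_{l u}^{k j} = ∂ y_j^k / ∂ y_u^l`, the `(u,j)` entry of
`W^{l+1} ⋯ W^{k}` (and `0` for `k < l`). -/
def A (n : ℕ → ℕ) (Wt : WTot n) (l k : ℕ) (u : Fin (n l)) (j : Fin (n k)) : ℝ :=
  if h : l ≤ k then
    chain n Wt l (k - l) u (Fin.cast (congrArg n (Nat.add_sub_cancel' h).symm) j) else 0

/-- The scalar output `y^L` of the network (`n L` is assumed positive, the paper has `n L = 1`). -/
def F (n : ℕ → ℕ) (L : ℕ) (hL : 0 < n L) (x : Fin (n 0) → ℝ) (W : Params n L) : ℝ :=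
  act n x (ext n L W) L ⟨0, hL⟩

/-- The canonical basis direction corresponding to the single weight `w_{i j}^{k+1}`. -/
def basis (n : ℕ → ℕ) (L : ℕ) (k : Fin L) (j : Fin (n k.1)) (i : Fin (n (k.1 + 1))) :
    Params n L :=
  Pi.single k (Pi.single j (Pi.single i (1 : ℝ)))

/-- The gradient of `f` w.r.t. the concatenated weight vector, as an element of `Params n L`:
its `(k,j,i)` entry is the partial derivative `∂ f / ∂ w_{i j}^{k+1}`. -/
noncomputable def grad (n : ℕ → ℕ) (L : ℕ) (f : Params n L → ℝ) (W : Params n L) :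
    Params n L :=
  fun k j i => fderiv ℝ f W (basis n L k j i)

/-- The Hessian bilinear form of `f` at `W` evaluated at directions `u, v`,
i.e. `uᵀ (∇² f) v`. -/
noncomputable def hess (n : ℕ → ℕ) (L : ℕ) (f : Params n L → ℝ) (W u v : Params n L) : ℝ :=
  fderiv ℝ (fun W' => fderiv ℝ f W' v) W u

/-- Euclidean dot product on the concatenated weight space. -/
def dot (n : ℕ → ℕ) (L : ℕ) (u v : Params n L) : ℝ :=
  ∑ k : Fin L, ∑ j : Fin (n k.1), ∑ i : Fin (n (k.1 + 1)), u k j i * v k j i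

/-- Squared Euclidean norm on the concatenated weight space. -/
def sqnorm (n : ℕ → ℕ) (L : ℕ) (u : Params n L) : ℝ := dot n L u u

/-- The Hessian–gradient quadratic form `gᵀ Ĥ g` of the network output. -/
noncomputable def gHg (n : ℕ → ℕ) (L : ℕ) (hL : 0 < n L) (x : Fin (n 0) → ℝ)
    (W : Params n L) : ℝ :=
  hess n L (F n L hL x) W (grad n L (F n L hL x) W) (grad n L (F n L hL x) W)

/-- Index type enumerating all individual weights. -/
abbrev Idx (n : ℕ → ℕ) (L : ℕ) := Σ k : Fin L, Fin (n k.1) × Fin (n (k.1 + 1))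

/-- The individual weight entry corresponding to an index. -/
def entry (n : ℕ → ℕ) (L : ℕ) (W : Params n L) (p : Idx n L) : ℝ := W p.1 p.2.1 p.2.2

end DLN

/-!
Flipping the sign of the first weight matrix, `W ↦ T W`, negates the output: `y^L(T W) = -y^L(W)`.
Differentiating this identity gives `g(T W) = -T g(W)` and `Ĥ(T W)(T u, T v) = -Ĥ(W)(u, v)`,
hence `gᵀ Ĥ g` is odd under `T`. Since the weights are independent and symmetric, `T W` has the
same law as `W`, so `E[gᵀ Ĥ g] = -E[gᵀ Ĥ g]`.
-/

section OddUnderLinearMap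

variable {E F : Type*} [NormedAddCommGroup E] [NormedSpace ℝ E]
  [NormedAddCommGroup F] [NormedSpace ℝ F] {T : E →L[ℝ] E}

theorem fderiv_apply_map_of_comp_eq_neg {f h : E → F} (hfh : ∀ w, f (T w) = -h w) {w : E}
    (hf : DifferentiableAt ℝ f (T w)) (u : E) :
    fderiv ℝ f (T w) (T u) = -fderiv ℝ h w u := by
  have hcomp : fderiv ℝ (f ∘ T) w = -fderiv ℝ h w := by
    rw [show f ∘ T = -h from funext hfh, fderiv_neg]
  rw [fderiv_comp w hf T.differentiableAt, T.fderiv] at hcomp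
  exact congrArg (· u) hcomp

theorem fderiv_fderiv_apply_map_of_comp_eq_neg {f : E → F} (hf : ContDiff ℝ 2 f)
    (hodd : ∀ w, f (T w) = -f w) (w u v : E) :
    fderiv ℝ (fun w' => fderiv ℝ f w' (T v)) (T w) (T u)
      = -fderiv ℝ (fun w' => fderiv ℝ f w' v) w u := by
  have hf' : Differentiable ℝ (fderiv ℝ f) :=
    (hf.fderiv_right (m := 1) le_rfl).differentiable one_ne_zero
  refine fderiv_apply_map_of_comp_eq_neg (f := fun w' => fderiv ℝ f w' (T v))
    (h := fun w' => fderiv ℝ f w' v) (fun w' => ?_)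
    ((hf' _).clm_apply (differentiableAt_const _)) u
  exact fderiv_apply_map_of_comp_eq_neg hodd (hf.differentiable two_ne_zero _) v

theorem fderiv_fderiv_apply_const {f : E → F} {w : E}
    (hf : DifferentiableAt ℝ (fderiv ℝ f) w) (u v : E) :
    fderiv ℝ (fun w' => fderiv ℝ f w' v) w u = fderiv ℝ (fderiv ℝ f) w u v := by
  rw [fderiv_clm_apply hf (differentiableAt_const v)]
  simp

end OddUnderLinearMap

theorem ProbabilityTheory.iIndepFun.identDistrib_comp {Ω ι : Type*} [MeasurableSpace Ω]
    {μ : Measure Ω} [IsProbabilityMeasure μ] [Fintype ι] {β : ι → Type*}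
    [∀ i, MeasurableSpace (β i)] {X : (i : ι) → Ω → β i} {f : (i : ι) → β i → β i}
    (hind : iIndepFun X μ) (hX : ∀ i, Measurable (X i)) (hf : ∀ i, Measurable (f i))
    (hlaw : ∀ i, μ.map (f i ∘ X i) = μ.map (X i)) :
    IdentDistrib (fun ω i => X i ω) (fun ω i => f i (X i ω)) μ μ where
  aemeasurable_fst := (measurable_pi_lambda _ hX).aemeasurable
  aemeasurable_snd := (measurable_pi_lambda _ fun i => (hf i).comp (hX i)).aemeasurable
  map_eq := by
    have hcomp := (hind.comp f hf).map_fun_eq_pi_map fun i => ((hf i).comp (hX i)).aemeasurable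
    simp only [hlaw] at hcomp
    rw [hind.map_fun_eq_pi_map fun i => (hX i).aemeasurable]
    exact hcomp.symm

theorem integral_eq_zero_of_identDistrib_neg {Ω : Type*} [MeasurableSpace Ω] {μ : Measure Ω}
    {Z : Ω → ℝ} (h : IdentDistrib Z (fun ω => -Z ω) μ μ) : ∫ ω, Z ω ∂μ = 0 := by
  have := h.integral_eq
  rw [integral_neg] at this
  linarith

namespace DLN

variable {n : ℕ → ℕ} {L : ℕ}

theorem contDiff_act (x : Fin (n 0) → ℝ) (l : ℕ) (i : Fin (n l)) {m : WithTop ℕ∞} :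
    ContDiff ℝ m (fun W : Params n L => act n x (ext n L W) l i) := by
  induction l with
  | zero => exact contDiff_const
  | succ l ih =>
    refine ContDiff.sum fun j _ => ContDiff.mul ?_ (ih j)
    unfold ext
    split_ifs
    · exact contDiff_pi.mp (contDiff_pi.mp (contDiff_pi.mp contDiff_id _) j) i
    · exact contDiff_const

theorem contDiff_F (hL : 0 < n L) (x : Fin (n 0) → ℝ) {m : WithTop ℕ∞} :
    ContDiff ℝ m (F n L hL x) :=
  contDiff_act x L ⟨0, hL⟩

theorem gHg_of_L_eq_zero (hL : 0 < n 0) (x : Fin (n 0) → ℝ) (W : Params n 0) :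
    gHg n 0 hL x W = 0 := by
  simp [gHg, hess, show F n 0 hL x = fun _ => x ⟨0, hL⟩ from rfl]

variable (n L) in
def negFirstLayer : Params n L →L[ℝ] Params n L :=
  ContinuousLinearMap.pi fun k =>
    if k.1 = 0 then -ContinuousLinearMap.proj k else ContinuousLinearMap.proj k

theorem negFirstLayer_apply (W : Params n L) (k : Fin L) :
    negFirstLayer n L W k = if k.1 = 0 then -W k else W k := by
  simp only [negFirstLayer, ContinuousLinearMap.pi_apply]
  split_ifs <;> rfl

theorem negFirstLayer_negFirstLayer (W : Params n L) :
    negFirstLayer n L (negFirstLayer n L W) = W := by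
  funext k
  by_cases hk : k.1 = 0 <;> simp [negFirstLayer_apply, hk]

theorem negFirstLayer_basis (k : Fin L) (j : Fin (n k.1)) (i : Fin (n (k.1 + 1))) :
    negFirstLayer n L (basis n L k j i)
      = if k.1 = 0 then -basis n L k j i else basis n L k j i := by
  funext k'
  rw [negFirstLayer_apply]
  by_cases hk' : k' = k
  · subst hk'
    split_ifs <;> rfl
  · simp only [basis, Pi.single_eq_of_ne hk']
    split_ifs <;> simp [Pi.single_eq_of_ne hk']

theorem ext_negFirstLayer (hL : 0 < L) (W : Params n L) (l : ℕ) :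
    ext n L (negFirstLayer n L W) l = if l = 0 then -ext n L W l else ext n L W l := by
  by_cases hl : l < L
  · by_cases h0 : l = 0 <;> simp [ext, hl, hL, negFirstLayer_apply, h0]
  · simp [ext, hl, show l ≠ 0 by omega]

theorem act_succ_negFirstLayer (hL : 0 < L) (x : Fin (n 0) → ℝ) (W : Params n L) (l : ℕ) :
    act n x (ext n L (negFirstLayer n L W)) (l + 1) = -act n x (ext n L W) (l + 1) := by
  induction l with
  | zero =>
    funext i
    simp [act, ext_negFirstLayer hL]
  | succ l ih =>
    funext i
    rw [act, ih]
    simp [act, ext_negFirstLayer hL]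

theorem F_negFirstLayer (hL : 0 < L) (hnL : 0 < n L) (x : Fin (n 0) → ℝ) (W : Params n L) :
    F n L hnL x (negFirstLayer n L W) = -F n L hnL x W := by
  obtain ⟨l, rfl⟩ := Nat.exists_eq_succ_of_ne_zero hL.ne'
  exact congrFun (act_succ_negFirstLayer hL x W l) _

theorem grad_negFirstLayer {f : Params n L → ℝ} (hf : Differentiable ℝ f)
    (hodd : ∀ W, f (negFirstLayer n L W) = -f W) (W : Params n L) :
    grad n L f (negFirstLayer n L W) = -negFirstLayer n L (grad n L f W) := by
  funext k j i
  have hT := fderiv_apply_map_of_comp_eq_neg hodd (hf (negFirstLayer n L W))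
    (negFirstLayer n L (basis n L k j i))
  rw [negFirstLayer_negFirstLayer] at hT
  simp only [grad, hT, negFirstLayer_basis, Pi.neg_apply, negFirstLayer_apply]
  split_ifs <;> simp [grad]

theorem hess_neg_neg (f : Params n L → ℝ) (W u v : Params n L) :
    hess n L f W (-u) (-v) = hess n L f W u v := by
  simp [hess]

theorem hess_grad_negFirstLayer {f : Params n L → ℝ} (hf : ContDiff ℝ 2 f)
    (hodd : ∀ W, f (negFirstLayer n L W) = -f W) (W : Params n L) :
    hess n L f (negFirstLayer n L W) (grad n L f (negFirstLayer n L W))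
        (grad n L f (negFirstLayer n L W))
      = -hess n L f W (grad n L f W) (grad n L f W) := by
  rw [grad_negFirstLayer (hf.differentiable two_ne_zero) hodd, ← map_neg, hess,
    fderiv_fderiv_apply_map_of_comp_eq_neg hf hodd, ← hess, hess_neg_neg]

theorem gHg_negFirstLayer (hL : 0 < L) (hnL : 0 < n L) (x : Fin (n 0) → ℝ) (W : Params n L) :
    gHg n L hnL x (negFirstLayer n L W) = -gHg n L hnL x W :=
  hess_grad_negFirstLayer (contDiff_F hnL x) (F_negFirstLayer hL hnL x) W

theorem continuous_gHg (hnL : 0 < n L) (x : Fin (n 0) → ℝ) : Continuous (gHg n L hnL x) := by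
  set f := F n L hnL x
  have hf' : ContDiff ℝ 1 (fderiv ℝ f) := (contDiff_F (m := 2) hnL x).fderiv_right le_rfl
  have hg : Continuous (grad n L f) :=
    continuous_pi fun k => continuous_pi fun j => continuous_pi fun i =>
      hf'.continuous.clm_apply continuous_const
  have hgHg : gHg n L hnL x = fun W => fderiv ℝ (fderiv ℝ f) W (grad n L f W) (grad n L f W) :=
    funext fun W => fderiv_fderiv_apply_const (hf'.differentiable one_ne_zero W) _ _
  rw [hgHg]
  exact ((hf'.continuous_fderiv one_ne_zero).clm_apply hg).clm_apply hg

theorem identDistrib_negFirstLayer {Ω : Type*} [MeasurableSpace Ω] {μ : Measure Ω}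
    [IsProbabilityMeasure μ] {W : Ω → Params n L}
    (hmeas : ∀ p : Idx n L, Measurable fun ω => entry n L (W ω) p)
    (hindep : iIndepFun (fun p ω => entry n L (W ω) p) μ)
    (hsymm : ∀ p : Idx n L, p.1.1 = 0 →
      μ.map (fun ω => -entry n L (W ω) p) = μ.map (fun ω => entry n L (W ω) p)) :
    IdentDistrib W (fun ω => negFirstLayer n L (W ω)) μ μ := by
  let flip : Idx n L → ℝ → ℝ := fun p => if p.1.1 = 0 then Neg.neg else id
  have hflip (p : Idx n L) : Measurable (flip p) := by
    dsimp only [flip]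
    split_ifs
    exacts [measurable_neg, measurable_id]
  have hentries := hindep.identDistrib_comp hmeas hflip fun p => by
    dsimp only [flip]
    split_ifs with hp
    exacts [hsymm p hp, rfl]
  have hofEntries :
      Measurable fun v : Idx n L → ℝ => (fun k j i => v ⟨k, (j, i)⟩ : Params n L) := by
    fun_prop
  convert hentries.comp hofEntries using 1
  · rfl
  · ext ω k j i
    by_cases hk : k.1 = 0 <;> simp [negFirstLayer_apply, entry, flip, hk]

end DLN

/-- For a deep linear network with scalar output (`n L = 1`) whose weights are
sampled i.i.d. from a symmetric distribution with finite moments of all orders, the expected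
Hessian–gradient quadratic form vanishes: `E[gᵀ Ĥ g] = 0`. -/
theorem statement0
    (n : ℕ → ℕ) (L : ℕ) (hNL : n L = 1) (x : Fin (n 0) → ℝ)
    (Ω : Type) [MeasurableSpace Ω] (μ : Measure Ω) [IsProbabilityMeasure μ]
    (W : Ω → DLN.Params n L)
    (hmeas : ∀ p : DLN.Idx n L, Measurable fun ω => DLN.entry n L (W ω) p)
    (ν : Measure ℝ) [IsProbabilityMeasure ν]
    (hsym : Measure.map (fun t : ℝ => -t) ν = ν)
    (hindep : iIndepFun
      (fun p ω => DLN.entry n L (W ω) p) μ)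
    (hlaw : ∀ p : DLN.Idx n L, Measure.map (fun ω => DLN.entry n L (W ω) p) μ = ν) :
    ∫ ω, DLN.gHg n L (by omega) x (W ω) ∂μ = 0 := by
  have hnL : 0 < n L := by omega
  rcases Nat.eq_zero_or_pos L with rfl | hL
  · simp [DLN.gHg_of_L_eq_zero]
  have hsymm (p : DLN.Idx n L) (_ : p.1.1 = 0) :
      μ.map (fun ω => -DLN.entry n L (W ω) p) = μ.map (fun ω => DLN.entry n L (W ω) p) := by
    rw [← Function.comp_def (fun t : ℝ => -t), ← Measure.map_map measurable_neg (hmeas p),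
      hlaw p, hsym]
  have hodd : IdentDistrib (fun ω => DLN.gHg n L hnL x (W ω))
      (fun ω => -DLN.gHg n L hnL x (W ω)) μ μ := by
    simpa only [Function.comp_def, DLN.gHg_negFirstLayer hL hnL x] using
      (DLN.identDistrib_negFirstLayer hmeas hindep hsymm).comp (DLN.continuous_gHg hnL x).measurable
  exact integral_eq_zero_of_identDistrib_neg hodd
end

section
/- For a deep linear network with scalar output and a layer index l with 2 < l < L−1, the partial Hessian–gradient quadratic form restricted to pairs of layers (l, k) with k ∉ {l−1, l, l+1} satisfies the exact identity: ∑_{u,v} ∑_{k ∉ {l−1,l,l+1}} ∑_{i,j} g_{uv}^l Ĥ_{ijk}^{uvl} g_{ij}^k = ∑_{k > l+1} ∑_{u,v,i,j} (a_{ki})² a_{lu} a_{lu}^{k−1,j} (y_v^{l−1})² y_j^{k−1} + ∑_{k < l−1} ∑_{u,v,i,j} (a_{lu})² a_{ki}^{l−1,v} a_{ki} (y_j^{k−1})² y_v^{l−1}. -/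
open MeasureTheory ProbabilityTheory

/-!
Writing `y^m = xᵀ W^1 ⋯ W^m` reduces everything to derivatives of the transfer matrices
`a^{m q}_{l u}` (`DLN.A`). By the product rule along the recursion `A l (m+1) = A l m * W^{m+1}`,
`∂ a^{m q}_{l u} / ∂ w^{k+1}_{u' v} = a^{k v}_{l u} a^{m q}_{k+1, u'}`, hence
`g^{k+1}_{u' v} = y^k_v a_{k+1, u'}`, and the Hessian entry between weights of layers `k + 1` and
`k' + 1` is a sum of two such products. One of the two contains a transfer matrix running from a
later layer to an earlier one, which vanishes; multiplying the other by the two gradient entries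
gives the two sums of the closed form, according to whether `k'` lies above or below `k`.
-/

namespace DLN

variable {n : ℕ → ℕ}

section TransferMatrices

variable {Wt : WTot n}

lemma A_add (l d : ℕ) (u : Fin (n l)) (q : Fin (n (l + d))) :
    A n Wt l (l + d) u q = chain n Wt l d u q := by
  rw [A, dif_pos (Nat.le_add_right l d)]
  generalize_proofs h
  generalize hd : l + d - l = d' at h ⊢
  obtain rfl : d' = d := by omega
  rfl

lemma A_of_lt {l m : ℕ} (h : m < l) (u : Fin (n l)) (q : Fin (n m)) :
    A n Wt l m u q = 0 :=
  dif_neg (Nat.not_le.2 h)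

lemma A_self (l : ℕ) (u q : Fin (n l)) : A n Wt l l u q = if u = q then 1 else 0 := by
  simpa [chain, Fin.val_inj] using A_add (Wt := Wt) l 0 u q

lemma A_succ {l m : ℕ} (h : l ≤ m) (u : Fin (n l)) (q : Fin (n (m + 1))) :
    A n Wt l (m + 1) u q = ∑ r : Fin (n m), A n Wt l m u r * Wt m r q := by
  obtain ⟨d, rfl⟩ := Nat.exists_eq_add_of_le h
  simp only [A_add]
  exact A_add l (d + 1) u q

lemma act_eq_sum_A (x : Fin (n 0) → ℝ) (l : ℕ) (j : Fin (n l)) :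
    act n x Wt l j = ∑ u, x u * A n Wt 0 l u j := by
  induction l with
  | zero => simp [act, A_self]
  | succ l ih =>
    simp only [act, ih, A_succ (Nat.zero_le l), Finset.mul_sum]
    rw [Finset.sum_comm]
    exact Fintype.sum_congr _ _ fun u => Fintype.sum_congr _ _ fun r => by ring

lemma A_succ_succ (k m : ℕ) (u : Fin (n (k + 1))) (q : Fin (n (m + 1))) :
    A n Wt (k + 1) (m + 1) u q
      = ∑ r : Fin (n m), A n Wt (k + 1) m u r * Wt m r q
        + if k = m ∧ (u : ℕ) = q then 1 else 0 := by
  rcases lt_trichotomy k m with h | rfl | h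
  · rw [A_succ h, if_neg (by omega), add_zero]
  · simp [A_of_lt (Nat.lt_succ_self k), A_self, Fin.val_inj]
  · rw [A_of_lt (by omega), if_neg (by omega)]
    simp [A_of_lt (show m < k + 1 by omega)]

lemma A_mul_A_of_le {l m k : ℕ} (h : m ≤ l) (u : Fin (n l)) (v : Fin (n k))
    (u' : Fin (n (k + 1))) (q : Fin (n m)) :
    A n Wt l k u v * A n Wt (k + 1) m u' q = 0 := by
  rcases lt_or_ge k l with hk | hk
  · rw [A_of_lt hk, zero_mul]
  · rw [A_of_lt (show m < k + 1 by omega), mul_zero]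

end TransferMatrices

section Derivatives

open ContinuousLinearMap

variable {L : ℕ}

lemma hasFDerivAt_ext_apply_of_lt {l : ℕ} (h : l < L) (j : Fin (n l)) (i : Fin (n (l + 1)))
    (W : Params n L) :
    HasFDerivAt (fun W : Params n L => ext n L W l j i)
      ((proj i).comp ((proj j).comp
        (proj (R := ℝ) (φ := fun k : Fin L => Fin (n k) → Fin (n (k + 1)) → ℝ)
          ⟨l, h⟩))) W := by
  simp only [ext, dif_pos h]
  have hk := hasFDerivAt_apply (𝕜 := ℝ)
    (F' := fun k : Fin L => Fin (n k) → Fin (n (k + 1)) → ℝ) ⟨l, h⟩ W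
  exact (hasFDerivAt_apply i _).comp _ ((hasFDerivAt_apply j _).comp _ hk)

lemma differentiableAt_ext_apply (l : ℕ) (j : Fin (n l)) (i : Fin (n (l + 1))) (W : Params n L) :
    DifferentiableAt ℝ (fun W : Params n L => ext n L W l j i) W := by
  by_cases h : l < L
  · exact (hasFDerivAt_ext_apply_of_lt h j i W).differentiableAt
  · simp [ext, h]

lemma fderiv_ext_apply (l : ℕ) (j : Fin (n l)) (i : Fin (n (l + 1))) (W D : Params n L) :
    fderiv ℝ (fun W : Params n L => ext n L W l j i) W D = ext n L D l j i := by
  by_cases h : l < L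
  · rw [(hasFDerivAt_ext_apply_of_lt h j i W).fderiv]
    simp [ext, h]
  · simp [ext, h]

lemma ext_basis (k : Fin L) (v : Fin (n k)) (u : Fin (n (k + 1))) (l : ℕ)
    (j : Fin (n l)) (i : Fin (n (l + 1))) :
    ext n L (basis n L k v u) l j i =
      if l = k ∧ (j : ℕ) = v ∧ (i : ℕ) = u then 1 else 0 := by
  obtain ⟨k, hk⟩ := k
  by_cases hl : l = k
  · subst hl
    simp only [ext, basis, dif_pos hk, Pi.single_eq_same, Pi.single_apply, true_and, Fin.val_inj]
    split_ifs <;> simp_all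
  · rw [if_neg fun h => hl h.1, ext]
    split_ifs
    · rw [basis, Pi.single_eq_of_ne fun h => hl (Fin.val_eq_of_eq h)]
      rfl
    · rfl

lemma sum_A_mul_ext_basis (Wt : WTot n) (l m : ℕ) (u : Fin (n l)) (q : Fin (n (m + 1)))
    (k : Fin L) (v : Fin (n k)) (u' : Fin (n (k + 1))) :
    ∑ r, A n Wt l m u r * ext n L (basis n L k v u') m r q
      = A n Wt l k u v * if (k : ℕ) = m ∧ (u' : ℕ) = q then 1 else 0 := by
  obtain ⟨k, hk⟩ := k
  by_cases hm : m = k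
  · subst hm
    simp only [ext_basis, Fin.val_inj, true_and, ite_and, mul_ite, mul_one, mul_zero,
      Finset.sum_ite_eq', Finset.mem_univ, if_true]
    exact if_congr eq_comm rfl rfl
  · simp [ext_basis, hm, Ne.symm hm]

lemma differentiableAt_A (l m : ℕ) (u : Fin (n l)) (q : Fin (n m)) (W : Params n L) :
    DifferentiableAt ℝ (fun W : Params n L => A n (ext n L W) l m u q) W := by
  rcases lt_or_ge m l with h | h
  · simp only [A_of_lt h]
    exact differentiableAt_const _
  induction m, h using Nat.le_induction with
  | base =>
    simp only [A_self]
    exact differentiableAt_const _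
  | succ m hlm ih =>
    simp only [A_succ hlm]
    exact DifferentiableAt.fun_sum fun r _ => (ih r).mul (differentiableAt_ext_apply m r q W)

lemma fderiv_A_basis (l m : ℕ) (u : Fin (n l)) (q : Fin (n m)) (k : Fin L) (v : Fin (n k))
    (u' : Fin (n (k + 1))) (W : Params n L) :
    fderiv ℝ (fun W : Params n L => A n (ext n L W) l m u q) W (basis n L k v u')
      = A n (ext n L W) l k u v * A n (ext n L W) (k + 1) m u' q := by
  rcases lt_or_ge m l with h | h
  · simp [A_of_lt h, A_mul_A_of_le h.le]
  induction m, h using Nat.le_induction with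
  | base => simp [A_self, A_mul_A_of_le le_rfl]
  | succ m hlm ih =>
    simp only [A_succ hlm]
    rw [fderiv_fun_sum (A := fun r W => A n (ext n L W) l m u r * ext n L W m r q)
      fun r _ => (differentiableAt_A l m u r W).mul (differentiableAt_ext_apply m r q W),
      sum_apply]
    simp only [fderiv_fun_mul (differentiableAt_A l m u _ W) (differentiableAt_ext_apply m _ q W),
      add_apply, smul_apply, smul_eq_mul, ih, fderiv_ext_apply, Finset.sum_add_distrib,
      sum_A_mul_ext_basis, A_succ_succ, mul_add]
    rw [Finset.mul_sum, add_comm]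
    exact congrArg (· + _) (Fintype.sum_congr _ _ fun r => by ring)

variable (x : Fin (n 0) → ℝ)

lemma differentiableAt_act (l : ℕ) (j : Fin (n l)) (W : Params n L) :
    DifferentiableAt ℝ (fun W : Params n L => act n x (ext n L W) l j) W := by
  simp only [act_eq_sum_A]
  exact DifferentiableAt.fun_sum fun u _ => (differentiableAt_A 0 l u j W).const_mul (x u)

lemma fderiv_act_basis (l : ℕ) (j : Fin (n l)) (k : Fin L) (v : Fin (n k))
    (u' : Fin (n (k + 1))) (W : Params n L) :
    fderiv ℝ (fun W : Params n L => act n x (ext n L W) l j) W (basis n L k v u')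
      = act n x (ext n L W) k v * A n (ext n L W) (k + 1) l u' j := by
  simp only [act_eq_sum_A]
  rw [fderiv_fun_sum (A := fun u W => x u * A n (ext n L W) 0 l u j)
    fun u _ => (differentiableAt_A 0 l u j W).const_mul (x u), sum_apply]
  simp only [fderiv_const_mul (differentiableAt_A 0 l _ j W), smul_apply, smul_eq_mul,
    fderiv_A_basis, Finset.sum_mul, mul_assoc]

lemma grad_F (hL : 0 < n L) (W : Params n L) (k : Fin L) (v : Fin (n k))
    (u : Fin (n (k + 1))) :
    grad n L (F n L hL x) W k v u
      = act n x (ext n L W) k v * A n (ext n L W) (k + 1) L u ⟨0, hL⟩ :=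
  fderiv_act_basis x L ⟨0, hL⟩ k v u W

lemma hess_F_basis (hL : 0 < n L) (W : Params n L) (k : Fin L) (v : Fin (n k))
    (u : Fin (n (k + 1))) (k' : Fin L) (j : Fin (n k')) (i : Fin (n (k' + 1))) :
    hess n L (F n L hL x) W (basis n L k v u) (basis n L k' j i)
      = act n x (ext n L W) k' j
          * (A n (ext n L W) (k' + 1) k i v * A n (ext n L W) (k + 1) L u ⟨0, hL⟩)
        + A n (ext n L W) (k' + 1) L i ⟨0, hL⟩
          * (act n x (ext n L W) k v * A n (ext n L W) (k + 1) k' u j) := by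
  have hgrad : (fun W' => fderiv ℝ (F n L hL x) W' (basis n L k' j i))
      = fun W' => act n x (ext n L W') k' j * A n (ext n L W') (k' + 1) L i ⟨0, hL⟩ :=
    funext fun W' => grad_F x hL W' k' j i
  rw [hess, hgrad, fderiv_fun_mul (differentiableAt_act x k' j W) (differentiableAt_A _ _ i _ W)]
  simp only [add_apply, smul_apply, smul_eq_mul, fderiv_act_basis, fderiv_A_basis]

lemma grad_mul_hess_mul_grad_of_le (hL : 0 < n L) (W : Params n L) {k k' : Fin L}
    (h : (k : ℕ) ≤ k') (v : Fin (n k)) (u : Fin (n (k + 1))) (j : Fin (n k'))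
    (i : Fin (n (k' + 1))) :
    grad n L (F n L hL x) W k v u * hess n L (F n L hL x) W (basis n L k v u) (basis n L k' j i)
        * grad n L (F n L hL x) W k' j i
      = A n (ext n L W) (k' + 1) L i ⟨0, hL⟩ ^ 2 * A n (ext n L W) (k + 1) L u ⟨0, hL⟩
          * A n (ext n L W) (k + 1) k' u j * act n x (ext n L W) k v ^ 2
          * act n x (ext n L W) k' j := by
  rw [grad_F, grad_F, hess_F_basis, A_of_lt (show (k : ℕ) < k' + 1 by omega)]
  ring

lemma grad_mul_hess_mul_grad_of_ge (hL : 0 < n L) (W : Params n L) {k k' : Fin L}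
    (h : (k' : ℕ) ≤ k) (v : Fin (n k)) (u : Fin (n (k + 1))) (j : Fin (n k'))
    (i : Fin (n (k' + 1))) :
    grad n L (F n L hL x) W k v u * hess n L (F n L hL x) W (basis n L k v u) (basis n L k' j i)
        * grad n L (F n L hL x) W k' j i
      = A n (ext n L W) (k + 1) L u ⟨0, hL⟩ ^ 2 * A n (ext n L W) (k' + 1) k i v
          * A n (ext n L W) (k' + 1) L i ⟨0, hL⟩ * act n x (ext n L W) k' j ^ 2
          * act n x (ext n L W) k v := by
  rw [grad_F, grad_F, hess_F_basis, A_of_lt (show (k' : ℕ) < k + 1 by omega)]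
  ring

end Derivatives

end DLN

/-- The paper's layers `l` and `k` are `lam + 1` and `kk + 1`. -/
theorem statement15
    (n : ℕ → ℕ) (L : ℕ) (hNL : n L = 1) (x : Fin (n 0) → ℝ) (W : DLN.Params n L)
    (lam : ℕ) (hlam2 : lam + 2 < L) :
    (∑ u : Fin (n (lam + 1)), ∑ v : Fin (n lam),
      ∑ kk ∈ Finset.univ.filter (fun kk : Fin L => kk.1 + 1 < lam ∨ lam + 1 < kk.1),
        ∑ i : Fin (n (kk.1 + 1)), ∑ j : Fin (n kk.1),
          DLN.grad n L (DLN.F n L (by omega) x) W ⟨lam, by omega⟩ v u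
            * DLN.hess n L (DLN.F n L (by omega) x) W
                (DLN.basis n L ⟨lam, by omega⟩ v u) (DLN.basis n L kk j i)
            * DLN.grad n L (DLN.F n L (by omega) x) W kk j i)
      = (∑ kk ∈ Finset.univ.filter (fun kk : Fin L => lam + 1 < kk.1),
          ∑ u : Fin (n (lam + 1)), ∑ v : Fin (n lam),
            ∑ i : Fin (n (kk.1 + 1)), ∑ j : Fin (n kk.1),
              (DLN.A n (DLN.ext n L W) (kk.1 + 1) L i ⟨0, by omega⟩) ^ 2
                * DLN.A n (DLN.ext n L W) (lam + 1) L u ⟨0, by omega⟩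
                * DLN.A n (DLN.ext n L W) (lam + 1) kk.1 u j
                * (DLN.act n x (DLN.ext n L W) lam v) ^ 2
                * DLN.act n x (DLN.ext n L W) kk.1 j)
        + ∑ kk ∈ Finset.univ.filter (fun kk : Fin L => kk.1 + 1 < lam),
            ∑ u : Fin (n (lam + 1)), ∑ v : Fin (n lam),
              ∑ i : Fin (n (kk.1 + 1)), ∑ j : Fin (n kk.1),
                (DLN.A n (DLN.ext n L W) (lam + 1) L u ⟨0, by omega⟩) ^ 2
                  * DLN.A n (DLN.ext n L W) (kk.1 + 1) lam i v
                  * DLN.A n (DLN.ext n L W) (kk.1 + 1) L i ⟨0, by omega⟩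
                  * (DLN.act n x (DLN.ext n L W) kk.1 j) ^ 2
                  * DLN.act n x (DLN.ext n L W) lam v := by
  have hL : 0 < n L := by omega
  have hsplit : Finset.univ.filter (fun kk : Fin L => kk.1 + 1 < lam ∨ lam + 1 < kk.1)
      = Finset.univ.filter (fun kk : Fin L => lam + 1 < kk.1)
        ∪ Finset.univ.filter (fun kk : Fin L => kk.1 + 1 < lam) := by
    rw [← Finset.filter_or]
    simp only [or_comm]
  have hdisj : Disjoint (Finset.univ.filter fun kk : Fin L => lam + 1 < kk.1)
      (Finset.univ.filter fun kk : Fin L => kk.1 + 1 < lam) :=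
    Finset.disjoint_filter.2 fun _ _ h₁ h₂ => by omega
  rw [Finset.sum_congr rfl fun u _ => Finset.sum_comm, Finset.sum_comm, hsplit,
    Finset.sum_union hdisj]
  congr 1
  · refine Finset.sum_congr rfl fun kk hkk => ?_
    have hkk := (Finset.mem_filter.1 hkk).2
    refine Fintype.sum_congr _ _ fun u => Fintype.sum_congr _ _ fun v =>
      Fintype.sum_congr _ _ fun i => Fintype.sum_congr _ _ fun j => ?_
    exact DLN.grad_mul_hess_mul_grad_of_le x hL W (k := ⟨lam, by omega⟩)
      (by omega : lam ≤ kk.1) v u j i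
  · refine Finset.sum_congr rfl fun kk hkk => ?_
    have hkk := (Finset.mem_filter.1 hkk).2
    refine Fintype.sum_congr _ _ fun u => Fintype.sum_congr _ _ fun v =>
      Fintype.sum_congr _ _ fun i => Fintype.sum_congr _ _ fun j => ?_
    exact DLN.grad_mul_hess_mul_grad_of_ge x hL W (k := ⟨lam, by omega⟩)
      (by omega : kk.1 ≤ lam) v u j i
end
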